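/- arXiv:2008.04123 — 3 statements merged into one kernel-verified Lean document; each statement's English description precedes it below -/
import Mathlib

section
/- Let G be a finite non-abelian group, H a subgroup of G, and g ∈ G with g ≠ 1 and g² ≠ 1. Let x ∈ H be a vertex of the relative g-noncommuting graph Γ^g_{H,G}. If exactly one of xg and xg⁻¹ is conjugate to x in G, then the degree of x equals |G| − |C_G(x)| − 1; if both xg and xg⁻¹ are conjugate to x in G, then the degree of x equals |G| − 2|C_G(x)| − 1. -/
/-! The non-neighbours of `x ∈ H` other than `x` itself are the `y` with `[x, y] = g` or
`[x, y] = g⁻¹`, i.e. with `y⁻¹ x y = x g` or `y⁻¹ x y = x g⁻¹`. The solutions of `y⁻¹ x y = z`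
form a right coset of `C_G(x)` when `z` is conjugate to `x` and are empty otherwise; since
`g ≠ 1` and `g ≠ g⁻¹`, the point `x` and the two solution sets are pairwise disjoint, so
the degree of `x` is `|G| - 1` minus `|C_G(x)|` for each of `xg`, `xg⁻¹` conjugate to `x`. -/

/-- The relative `g`-noncommuting graph of a group `G` with respect to a subgroup `H`:
vertices are the elements of `G`, and distinct `x`, `y` are adjacent iff
(`x ∈ H` or `y ∈ H`) and the commutator `x⁻¹ * y⁻¹ * x * y` is neither `g` nor `g⁻¹`. -/
def relGraph {G : Type*} [Group G] (H : Subgroup G) (g : G) : SimpleGraph G where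
  Adj x y := x ≠ y ∧ (x ∈ H ∨ y ∈ H) ∧ x⁻¹ * y⁻¹ * x * y ≠ g ∧ x⁻¹ * y⁻¹ * x * y ≠ g⁻¹
  symm := by
    constructor
    rintro x y ⟨hxy, hmem, h1, h2⟩
    have key : (x⁻¹ * y⁻¹ * x * y)⁻¹ = y⁻¹ * x⁻¹ * y * x := by group
    refine ⟨hxy.symm, hmem.symm, fun h => h2 ?_, fun h => h1 ?_⟩
    · rw [← inv_inv (x⁻¹ * y⁻¹ * x * y), key, h]
    · rw [← inv_inv (x⁻¹ * y⁻¹ * x * y), key, h, inv_inv]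
  loopless := ⟨fun x h => h.1 rfl⟩

def conjugatorsTo {G : Type*} [Group G] (x z : G) : Set G := {y | y⁻¹ * x * y = z}

section

variable {G : Type*} [Group G]

theorem commutator_eq_iff_conj_eq_mul {x y a : G} :
    x⁻¹ * y⁻¹ * x * y = a ↔ y⁻¹ * x * y = x * a := by
  rw [show x⁻¹ * y⁻¹ * x * y = x⁻¹ * (y⁻¹ * x * y) by group, inv_mul_eq_iff_eq_mul]

theorem conjugatorsTo_eq_image_centralizer {x z y₀ : G} (h : y₀⁻¹ * x * y₀ = z) :
    conjugatorsTo x z = (· * y₀) '' (Subgroup.centralizer ({x} : Set G) : Set G) := by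
  subst h
  ext y
  simp only [conjugatorsTo, Set.mem_ofPred_eq, Set.mem_image, SetLike.mem_coe,
    Subgroup.mem_centralizer_singleton_iff]
  constructor
  · intro hy
    refine ⟨y * y₀⁻¹, ?_, by group⟩
    calc y * y₀⁻¹ * x = y * (y₀⁻¹ * x * y₀) * y₀⁻¹ := by group
      _ = x * (y * y₀⁻¹) := by rw [← hy]; group
  · rintro ⟨c, hc, rfl⟩
    calc (c * y₀)⁻¹ * x * (c * y₀) = y₀⁻¹ * (c⁻¹ * (x * c)) * y₀ := by group
      _ = y₀⁻¹ * x * y₀ := by rw [← hc]; group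

theorem ncard_conjugatorsTo_of_exists [Finite G] {x z : G} (h : ∃ y : G, y⁻¹ * x * y = z) :
    (conjugatorsTo x z).ncard = Nat.card (Subgroup.centralizer ({x} : Set G)) := by
  obtain ⟨y₀, hy₀⟩ := h
  rw [conjugatorsTo_eq_image_centralizer hy₀,
    Set.ncard_image_of_injective _ (mul_left_injective y₀), ← Nat.card_coe_set_eq]
  rfl

theorem ncard_conjugatorsTo_of_not_exists {x z : G} (h : ¬∃ y : G, y⁻¹ * x * y = z) :
    (conjugatorsTo x z).ncard = 0 := by
  have hempty : conjugatorsTo x z = ∅ := Set.eq_empty_of_forall_notMem fun y hy => h ⟨y, hy⟩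
  rw [hempty, Set.ncard_empty]

theorem disjoint_conjugatorsTo {x z₁ z₂ : G} (h : z₁ ≠ z₂) :
    Disjoint (conjugatorsTo x z₁) (conjugatorsTo x z₂) :=
  Set.disjoint_left.mpr fun _ hy₁ hy₂ => h (hy₁.symm.trans hy₂)

theorem notMem_conjugatorsTo_mul {x a : G} (ha : a ≠ 1) : x ∉ conjugatorsTo x (x * a) := by
  intro hx
  apply ha
  simpa [conjugatorsTo] using hx

theorem relGraph_neighborSet_of_mem {H : Subgroup G} {x : G} (g : G) (hx : x ∈ H) :
    (relGraph H g).neighborSet x =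
      ({x} ∪ conjugatorsTo x (x * g) ∪ conjugatorsTo x (x * g⁻¹))ᶜ := by
  ext y
  simp only [SimpleGraph.mem_neighborSet, relGraph, conjugatorsTo, Set.mem_compl_iff,
    Set.mem_union, Set.mem_singleton_iff, Set.mem_ofPred_eq, not_or, ne_eq,
    commutator_eq_iff_conj_eq_mul, ne_comm (a := x)]
  tauto

theorem ncard_neighborSet_add_ncard_conjugatorsTo [Finite G] {H : Subgroup G} {g x : G}
    (hx : x ∈ H) (hg1 : g ≠ 1) (hg2 : g ^ 2 ≠ 1) :
    ((relGraph H g).neighborSet x).ncard + 1 + (conjugatorsTo x (x * g)).ncard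
      + (conjugatorsTo x (x * g⁻¹)).ncard = Nat.card G := by
  have hgg : x * g ≠ x * g⁻¹ := by
    rw [Ne, mul_right_inj, eq_inv_iff_mul_eq_one, ← pow_two]
    exact hg2
  have hdisj : Disjoint {x} (conjugatorsTo x (x * g) ∪ conjugatorsTo x (x * g⁻¹)) := by
    rw [Set.disjoint_singleton_left, Set.mem_union, not_or]
    exact ⟨notMem_conjugatorsTo_mul hg1, notMem_conjugatorsTo_mul (inv_ne_one.mpr hg1)⟩
  rw [← Set.ncard_add_ncard_compl ({x} ∪ conjugatorsTo x (x * g) ∪ conjugatorsTo x (x * g⁻¹)),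
    relGraph_neighborSet_of_mem g hx, Set.union_assoc, Set.ncard_union_eq hdisj,
    Set.ncard_union_eq (disjoint_conjugatorsTo hgg), Set.ncard_singleton]
  ring

end

theorem stmt2_general {G : Type*} [Group G] [Fintype G]
    (H : Subgroup G) (g : G) (hg1 : g ≠ 1) (hg2 : g ^ 2 ≠ 1)
    (x : G) (hx : x ∈ H) :
    (((∃ y : G, y⁻¹ * x * y = x * g) ∧ ¬ (∃ y : G, y⁻¹ * x * y = x * g⁻¹)) ∨
     ((¬ ∃ y : G, y⁻¹ * x * y = x * g) ∧ (∃ y : G, y⁻¹ * x * y = x * g⁻¹)) →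
       (((relGraph H g).neighborSet x).ncard : ℤ)
         = (Nat.card G : ℤ) - (Nat.card (Subgroup.centralizer ({x} : Set G)) : ℤ) - 1) ∧
    ((∃ y : G, y⁻¹ * x * y = x * g) ∧ (∃ y : G, y⁻¹ * x * y = x * g⁻¹) →
       (((relGraph H g).neighborSet x).ncard : ℤ)
         = (Nat.card G : ℤ) - 2 * (Nat.card (Subgroup.centralizer ({x} : Set G)) : ℤ) - 1) := by
  have key := ncard_neighborSet_add_ncard_conjugatorsTo hx hg1 hg2
  constructor
  · rintro (⟨h₁, h₂⟩ | ⟨h₁, h₂⟩)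
    · rw [ncard_conjugatorsTo_of_exists h₁, ncard_conjugatorsTo_of_not_exists h₂] at key
      omega
    · rw [ncard_conjugatorsTo_of_not_exists h₁, ncard_conjugatorsTo_of_exists h₂] at key
      omega
  · rintro ⟨h₁, h₂⟩
    rw [ncard_conjugatorsTo_of_exists h₁, ncard_conjugatorsTo_of_exists h₂] at key
    omega

theorem stmt2 {G : Type*} [Group G] [Fintype G]
    (hG : ¬ ∀ a b : G, a * b = b * a)
    (H : Subgroup G) (g : G) (hg1 : g ≠ 1) (hg2 : g ^ 2 ≠ 1)
    (x : G) (hx : x ∈ H) :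
    (((∃ y : G, y⁻¹ * x * y = x * g) ∧ ¬ (∃ y : G, y⁻¹ * x * y = x * g⁻¹)) ∨
     ((¬ ∃ y : G, y⁻¹ * x * y = x * g) ∧ (∃ y : G, y⁻¹ * x * y = x * g⁻¹)) →
       (((relGraph H g).neighborSet x).ncard : ℤ)
         = (Nat.card G : ℤ) - (Nat.card (Subgroup.centralizer ({x} : Set G)) : ℤ) - 1) ∧
    ((∃ y : G, y⁻¹ * x * y = x * g) ∧ (∃ y : G, y⁻¹ * x * y = x * g⁻¹) →
       (((relGraph H g).neighborSet x).ncard : ℤ)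
         = (Nat.card G : ℤ) - 2 * (Nat.card (Subgroup.centralizer ({x} : Set G)) : ℤ) - 1) :=
  stmt2_general H g hg1 hg2 x hx
end

section
/- Let G be a finite non-abelian group, H a subgroup of G with H ≠ Z(H,G) and |H| ≠ 2, and g ∈ K(H,G) with g ≠ 1. Then the relative g-noncommuting graph Γ^g_{H,G} is not a star graph, i.e. there is no vertex v of Γ^g_{H,G} such that two distinct vertices x, y are adjacent if and only if x = v or y = v. -/
/-!
If `Γ^g_{H,G}` were a star, its centre would have to be `1`, which is adjacent to every vertex
because `[1, y] = 1 ≠ g^{±1}`. For the same reason any two distinct commuting nonidentity elements,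
one of them in `H`, are adjacent, which a star forbids. Inside `H` this makes every nonidentity
element an involution (it commutes with its inverse) and then forces `H = {1, a}` (two
involutions whose product is an involution commute), contradicting `|H| ≠ 2`.
-/

namespace SimpleGraph

variable {V : Type*}

def IsStarWithCenter (Γ : SimpleGraph V) (v : V) : Prop :=
  ∀ x y : V, x ≠ y → (Γ.Adj x y ↔ x = v ∨ y = v)

namespace IsStarWithCenter

variable {Γ : SimpleGraph V} {v : V}

theorem not_adj (hΓ : Γ.IsStarWithCenter v) {x y : V} (hx : x ≠ v) (hy : y ≠ v) :
    ¬ Γ.Adj x y := fun hxy => ((hΓ x y hxy.ne).mp hxy).elim hx hy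

theorem eq_center_of_adj_of_adj (hΓ : Γ.IsStarWithCenter v) {u y z : V} (hyz : y ≠ z)
    (huy : Γ.Adj u y) (huz : Γ.Adj u z) : u = v := by
  by_contra hu
  have hy : y = v := by_contra fun hy => hΓ.not_adj hu hy huy
  have hz : z = v := by_contra fun hz => hΓ.not_adj hu hz huz
  exact hyz (hy.trans hz.symm)

end IsStarWithCenter

end SimpleGraph

theorem relGraph_adj_of_commute {G : Type*} [Group G] {H : Subgroup G} {g x y : G}
    (hg : g ≠ 1) (hxy : x ≠ y) (hmem : x ∈ H ∨ y ∈ H) (hc : Commute x y) :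
    (relGraph H g).Adj x y := by
  have hcomm : x⁻¹ * y⁻¹ * x * y = 1 := by
    rw [mul_assoc, hc.eq]
    group
  exact ⟨hxy, hmem, hcomm ▸ hg.symm, hcomm ▸ (inv_ne_one.mpr hg).symm⟩

namespace Subgroup

variable {G : Type*} [Group G] {H : Subgroup G}

theorem mul_self_eq_one_of_forall_commute_eq
    (hH : ∀ x ∈ H, ∀ y ∈ H, x ≠ 1 → y ≠ 1 → Commute x y → x = y) {x : G} (hx : x ∈ H) :
    x * x = 1 := by
  by_cases hx1 : x = 1
  · rw [hx1, one_mul]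
  · have := hH x hx x⁻¹ (H.inv_mem hx) hx1 (inv_ne_one.mpr hx1) (Commute.inv_right rfl)
    nth_rewrite 1 [this]
    exact inv_mul_cancel x

theorem eq_one_or_eq_of_forall_commute_eq
    (hH : ∀ x ∈ H, ∀ y ∈ H, x ≠ 1 → y ≠ 1 → Commute x y → x = y)
    {a x : G} (ha : a ∈ H) (ha1 : a ≠ 1) (hx : x ∈ H) : x = 1 ∨ x = a := by
  by_cases hx1 : x = 1
  · exact Or.inl hx1
  right
  have hsq := fun {z : G} (hz : z ∈ H) => mul_self_eq_one_of_forall_commute_eq hH hz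
  by_cases hxa : x * a = 1
  · rw [eq_inv_of_mul_eq_one_left hxa, inv_eq_of_mul_eq_one_left (hsq ha)]
  · -- `x`, `a` and `x * a` all square to `1`, so `x * a = (x * a)⁻¹ = a * x`.
    have hc : Commute x a := by
      calc x * a = x * (x * a * (x * a)) * a := by rw [hsq (H.mul_mem hx ha), mul_one]
        _ = (x * x) * a * x * (a * a) := by group
        _ = a * x := by rw [hsq hx, hsq ha]; group
    exact hH x hx a ha hx1 ha1 hc

theorem card_eq_two_of_forall_commute_eq
    (hH : ∀ x ∈ H, ∀ y ∈ H, x ≠ 1 → y ≠ 1 → Commute x y → x = y)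
    {a : G} (ha : a ∈ H) (ha1 : a ≠ 1) : Nat.card H = 2 := by
  have hset : (H : Set G) = {1, a} := by
    ext x
    refine ⟨eq_one_or_eq_of_forall_commute_eq hH ha ha1, ?_⟩
    rintro (rfl | rfl)
    exacts [H.one_mem, ha]
  rw [← SetLike.coe_sort_coe, Nat.card_coe_set_eq, hset, Set.ncard_pair ha1.symm]

end Subgroup

theorem stmt11_general {G : Type*} [Group G]
    (H : Subgroup G)
    (hHZ : (H : Set G) ≠ {x : G | x ∈ H ∧ ∀ y : G, x * y = y * x})
    (hH2 : Nat.card H ≠ 2)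
    (g : G) (hg : g ≠ 1) :
    ¬ ∃ v : G, ∀ x y : G, x ≠ y →
        ((relGraph H g).Adj x y ↔ (x = v ∨ y = v)) := by
  rintro ⟨v, hv⟩
  have hstar : (relGraph H g).IsStarWithCenter v := hv
  obtain ⟨a, haH, b, hab⟩ : ∃ a ∈ H, ∃ b : G, ¬ Commute a b := by
    by_contra! h
    exact hHZ (Set.ext fun x => ⟨fun hx => ⟨hx, h x hx⟩, And.left⟩)
  have ha1 : a ≠ 1 := by rintro rfl; exact hab (Commute.one_left b)
  have hb1 : b ≠ 1 := by rintro rfl; exact hab (Commute.one_right a)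
  have hv1 : v = 1 := (hstar.eq_center_of_adj_of_adj (fun h : a = b => hab (h ▸ Commute.refl a))
    (relGraph_adj_of_commute hg ha1.symm (Or.inl H.one_mem) (Commute.one_left a))
    (relGraph_adj_of_commute hg hb1.symm (Or.inl H.one_mem) (Commute.one_left b))).symm
  subst hv1
  refine hH2 (Subgroup.card_eq_two_of_forall_commute_eq (fun x hx y _ hx1 hy1 hxy => ?_) haH ha1)
  by_contra hne
  exact hstar.not_adj hx1 hy1 (relGraph_adj_of_commute hg hne (Or.inl hx) hxy)

theorem stmt11 {G : Type*} [Group G] [Fintype G]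
    (hG : ¬ ∀ a b : G, a * b = b * a)
    (H : Subgroup G)
    (hHZ : (H : Set G) ≠ {x : G | x ∈ H ∧ ∀ y : G, x * y = y * x})
    (hH2 : Nat.card H ≠ 2)
    (g : G) (hgK : ∃ x ∈ H, ∃ y : G, x⁻¹ * y⁻¹ * x * y = g) (hg : g ≠ 1) :
    ¬ ∃ v : G, ∀ x y : G, x ≠ y →
        ((relGraph H g).Adj x y ↔ (x = v ∨ y = v)) :=
  stmt11_general H hHZ hH2 g hg
end

section
/- Let G be a finite non-abelian group, H a non-trivial subgroup of G with H ≠ Z(H,G), and g ∈ K(H,G) with g ≠ 1 and g² = 1. If g ∈ H, then twice the number of edges of Γ^g_{H,G} equals 2(|H||G| − N_g(H,G)) − (|H|² − N_g(H)) − |H|; if g ∈ G \ H, then twice the number of edges of Γ^g_{H,G} equals 2(|H||G| − N_g(H,G)) − |H|² − |H|. -/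
open Finset

section PairCounting

variable {α : Type*} [Fintype α]

theorem card_filter_or_add_card_filter_and (P : α → Prop) [DecidablePred P]
    (R : α → α → Prop) [DecidableRel R] [Std.Symm R] :
    #{p : α × α | (P p.1 ∨ P p.2) ∧ R p.1 p.2} + #{p : α × α | (P p.1 ∧ P p.2) ∧ R p.1 p.2}
      = 2 * #{p : α × α | P p.1 ∧ R p.1 p.2} := by
  classical
  set A : Finset (α × α) := {p | P p.1 ∧ R p.1 p.2}
  set B : Finset (α × α) := {p | P p.2 ∧ R p.1 p.2}
  have hswap : #B = #A := card_equiv (Equiv.prodComm α α) fun p => by simp [A, B, comm]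
  calc _ = #(A ∪ B) + #(A ∩ B) := by
        rw [← filter_or, ← filter_and]
        congr 2 <;> ext p <;> simp only [mem_filter, mem_univ, true_and] <;> tauto
    _ = _ := by rw [card_union_add_card_inter, hswap, two_mul]

theorem card_filter_ne_add_card_filter_add_card [DecidableEq α] (P Q : α → Prop)
    [DecidablePred P] [DecidablePred Q] (hPQ : ∀ a, P a → Q a)
    (S : α → α → Prop) [DecidableRel S] (hS : ∀ a, ¬ S a a) :
    #{p : α × α | (P p.1 ∧ Q p.2) ∧ p.1 ≠ p.2 ∧ ¬ S p.1 p.2}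
      + #{p : α × α | (P p.1 ∧ Q p.2) ∧ S p.1 p.2} + #{a | P a}
      = #{a | P a} * #{a | Q a} := by
  have hdiag : #{a | P a} = #{p : α × α | (P p.1 ∧ Q p.2) ∧ p.1 = p.2} := by
    rw [← diag_card]
    congr 1
    ext ⟨a, b⟩
    simp only [mem_diag, mem_filter, mem_univ, true_and]
    constructor
    · rintro ⟨ha, rfl⟩; exact ⟨⟨ha, hPQ a ha⟩, rfl⟩
    · rintro ⟨⟨ha, -⟩, rfl⟩; exact ⟨ha, rfl⟩
  nth_rewrite 1 [hdiag]
  rw [← card_union_of_disjoint, ← card_union_of_disjoint, ← card_product, ← filter_product,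
    univ_product_univ]
  · congr 1
    ext ⟨a, b⟩
    simp only [mem_union, mem_filter, mem_univ, true_and]
    by_cases hab : a = b
    · subst hab; have := hS a; tauto
    · tauto
  · rw [disjoint_union_left, disjoint_filter, disjoint_filter]
    exact ⟨fun p _ h1 h2 => h1.2.1 h2.2, fun p _ h1 h2 => hS _ (h2.2 ▸ h1.2)⟩
  · rw [disjoint_filter]
    exact fun p _ h1 h2 => h1.2.2 h2.2

end PairCounting

section RelGraph

variable {G : Type*} [Group G] {g : G}

theorem relGraph_adj_iff (H : Subgroup G) (hg : g⁻¹ = g) {x y : G} :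
    (relGraph H g).Adj x y ↔ (x ∈ H ∨ y ∈ H) ∧ x ≠ y ∧ ¬ x⁻¹ * y⁻¹ * x * y = g := by
  simp only [relGraph, hg]
  tauto

theorem two_mul_ncard_edgeSet_relGraph [Fintype G] [DecidableEq G] (H : Subgroup G)
    [DecidablePred (· ∈ H)] (hg : g⁻¹ = g) :
    2 * (relGraph H g).edgeSet.ncard
      = #{p : G × G | (p.1 ∈ H ∨ p.2 ∈ H) ∧ p.1 ≠ p.2 ∧ ¬ p.1⁻¹ * p.2⁻¹ * p.1 * p.2 = g} := by
  classical
  rw [← SimpleGraph.coe_edgeFinset, Set.ncard_coe_finset, SimpleGraph.two_mul_card_edgeFinset]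
  congr 1
  ext
  simp [relGraph_adj_iff H hg]

theorem symm_ne_and_commutator_ne (hg : g⁻¹ = g) :
    Std.Symm fun x y : G => x ≠ y ∧ ¬ x⁻¹ * y⁻¹ * x * y = g where
  symm x y := fun ⟨hne, hxy⟩ =>
    ⟨hne.symm, fun hyx => hxy (by rw [← hg, ← hyx]; group)⟩

end RelGraph

theorem stmt17_general {G : Type*} [Group G] [Fintype G]
    (H : Subgroup G)
    (g : G)
    (hg1 : g ≠ 1) (hg2 : g ^ 2 = 1) :
    (g ∈ H →
      2 * (((relGraph H g).edgeSet.ncard : ℤ))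
        = 2 * ((Nat.card H : ℤ) * (Nat.card G : ℤ)
              - ({p : G × G | p.1 ∈ H ∧ p.1⁻¹ * p.2⁻¹ * p.1 * p.2 = g}.ncard : ℤ))
          - ((Nat.card H : ℤ) ^ 2
              - ({p : G × G | p.1 ∈ H ∧ p.2 ∈ H ∧ p.1⁻¹ * p.2⁻¹ * p.1 * p.2 = g}.ncard : ℤ))
          - (Nat.card H : ℤ)) ∧
    (g ∉ H →
      2 * (((relGraph H g).edgeSet.ncard : ℤ))
        = 2 * ((Nat.card H : ℤ) * (Nat.card G : ℤ)
              - ({p : G × G | p.1 ∈ H ∧ p.1⁻¹ * p.2⁻¹ * p.1 * p.2 = g}.ncard : ℤ))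
          - (Nat.card H : ℤ) ^ 2 - (Nat.card H : ℤ)) := by
  classical
  have hg : g⁻¹ = g := inv_eq_of_mul_eq_one_right (pow_two g ▸ hg2)
  have hdiag : ∀ x : G, ¬ x⁻¹ * x⁻¹ * x * x = g := fun x h => hg1 (by rw [← h]; group)
  have := symm_ne_and_commutator_ne hg
  have hE := two_mul_ncard_edgeSet_relGraph H hg
  have hEA := card_filter_or_add_card_filter_and (· ∈ H)
    fun x y : G => x ≠ y ∧ ¬ x⁻¹ * y⁻¹ * x * y = g
  have hA := card_filter_ne_add_card_filter_add_card (· ∈ H) (fun _ => True)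
    (fun _ _ => trivial) (fun x y : G => x⁻¹ * y⁻¹ * x * y = g) hdiag
  have hC := card_filter_ne_add_card_filter_add_card (· ∈ H) (· ∈ H)
    (fun _ h => h) (fun x y : G => x⁻¹ * y⁻¹ * x * y = g) hdiag
  have hH : #{x : G | x ∈ H} = Nat.card H := by
    rw [Nat.card_eq_fintype_card, Fintype.card_subtype]
  simp only [and_true, filter_true, card_univ, hH, ← Nat.card_eq_fintype_card] at hA hC
  simp only [and_assoc] at hEA hC
  simp only [Set.ncard_eq_toFinset_card', Set.toFinset_ofPred] at hE ⊢
  zify at hE hEA hA hC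
  refine ⟨fun _ => by linarith, fun hgH => ?_⟩
  have hCg : #{p : G × G | p.1 ∈ H ∧ p.2 ∈ H ∧ p.1⁻¹ * p.2⁻¹ * p.1 * p.2 = g} = 0 :=
    card_eq_zero.2 <| filter_eq_empty_iff.2 fun _ _ ⟨hx, hy, h⟩ => hgH <|
      h ▸ H.mul_mem (H.mul_mem (H.mul_mem (H.inv_mem hx) (H.inv_mem hy)) hx) hy
  simp only [hCg, Nat.cast_zero] at hC
  linarith

theorem stmt17 {G : Type*} [Group G] [Fintype G]
    (hG : ¬ ∀ a b : G, a * b = b * a)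
    (H : Subgroup G) (hH : H ≠ ⊥)
    (hHZ : (H : Set G) ≠ {x : G | x ∈ H ∧ ∀ y : G, x * y = y * x})
    (g : G) (hgK : ∃ x ∈ H, ∃ y : G, x⁻¹ * y⁻¹ * x * y = g)
    (hg1 : g ≠ 1) (hg2 : g ^ 2 = 1) :
    (g ∈ H →
      2 * (((relGraph H g).edgeSet.ncard : ℤ))
        = 2 * ((Nat.card H : ℤ) * (Nat.card G : ℤ)
              - ({p : G × G | p.1 ∈ H ∧ p.1⁻¹ * p.2⁻¹ * p.1 * p.2 = g}.ncard : ℤ))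
          - ((Nat.card H : ℤ) ^ 2
              - ({p : G × G | p.1 ∈ H ∧ p.2 ∈ H ∧ p.1⁻¹ * p.2⁻¹ * p.1 * p.2 = g}.ncard : ℤ))
          - (Nat.card H : ℤ)) ∧
    (g ∉ H →
      2 * (((relGraph H g).edgeSet.ncard : ℤ))
        = 2 * ((Nat.card H : ℤ) * (Nat.card G : ℤ)
              - ({p : G × G | p.1 ∈ H ∧ p.1⁻¹ * p.2⁻¹ * p.1 * p.2 = g}.ncard : ℤ))
          - (Nat.card H : ℤ) ^ 2 - (Nat.card H : ℤ)) :=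
  stmt17_general H g hg1 hg2
end
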